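/- The set of integer points (x,y,z) ∈ ℤ³ satisfying 2x² + 2y² + 2z² + xy + 2xz + 2yz − 4x − 4y − 5z + 3 ≤ 0 is exactly {(1,1,0), (1,0,1), (0,1,1), (0,0,1)}, and the left-hand side vanishes at each of these four points. (These four points are the vertices of the tetrahedron T⁵_{(0,0,0)}.) -/

import Mathlib

/-! Completing the squares gives
`8 q = (2x + 2y + 4z - 5)² + 3 (2x - 1)² + 3 (2y - 1)² - 7`.
At integer points the three squared numbers are odd, so each square is at least `1` and `q ≥ 0`;
hence `q ≤ 0` forces `q = 0`, i.e. all three odd numbers are `±1`, which leaves exactly the four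
vertices. -/

theorem Int.one_le_sq_of_odd {n : ℤ} (hn : Odd n) : 1 ≤ n ^ 2 :=
  (one_le_sq_iff_one_le_abs n).mpr (Int.one_le_abs (by rintro rfl; exact Int.not_odd_zero hn))

namespace EllipsoidQ5

def q (v : ℤ × ℤ × ℤ) : ℤ :=
  2 * v.1 ^ 2 + 2 * v.2.1 ^ 2 + 2 * v.2.2 ^ 2 + v.1 * v.2.1 + 2 * v.1 * v.2.2 + 2 * v.2.1 * v.2.2 -
    4 * v.1 - 4 * v.2.1 - 5 * v.2.2 + 3

def vertices : Set (ℤ × ℤ × ℤ) := {(1, 1, 0), (1, 0, 1), (0, 1, 1), (0, 0, 1)}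

theorem eight_mul_q (x y z : ℤ) :
    8 * q (x, y, z) = (2 * x + 2 * y + 4 * z - 5) ^ 2 + 3 * (2 * x - 1) ^ 2 + 3 * (2 * y - 1) ^ 2 - 7 := by
  unfold q
  ring

theorem one_le_completed_squares (x y z : ℤ) :
    1 ≤ (2 * x + 2 * y + 4 * z - 5) ^ 2 ∧ 1 ≤ (2 * x - 1) ^ 2 ∧ 1 ≤ (2 * y - 1) ^ 2 :=
  ⟨Int.one_le_sq_of_odd ⟨x + y + 2 * z - 3, by ring⟩, Int.one_le_sq_of_odd ⟨x - 1, by ring⟩,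
    Int.one_le_sq_of_odd ⟨y - 1, by ring⟩⟩

theorem q_nonneg (v : ℤ × ℤ × ℤ) : 0 ≤ q v := by
  obtain ⟨x, y, z⟩ := v
  obtain ⟨ha, hb, hc⟩ := one_le_completed_squares x y z
  linarith [eight_mul_q x y z]

theorem q_nonpos_iff_sq_eq_one (x y z : ℤ) :
    q (x, y, z) ≤ 0 ↔
      (2 * x + 2 * y + 4 * z - 5) ^ 2 = 1 ∧ (2 * x - 1) ^ 2 = 1 ∧ (2 * y - 1) ^ 2 = 1 := by
  obtain ⟨ha, hb, hc⟩ := one_le_completed_squares x y z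
  have h := eight_mul_q x y z
  constructor
  · intro hq
    refine ⟨?_, ?_, ?_⟩ <;> linarith
  · rintro ⟨ha₁, hb₁, hc₁⟩
    linarith

theorem q_nonpos_iff (v : ℤ × ℤ × ℤ) : q v ≤ 0 ↔ v ∈ vertices := by
  obtain ⟨x, y, z⟩ := v
  simp only [q_nonpos_iff_sq_eq_one, sq_eq_one_iff, vertices, Set.mem_insert_iff,
    Set.mem_singleton_iff, Prod.mk.injEq]
  omega

end EllipsoidQ5

open EllipsoidQ5

theorem lattice_points_of_ellipsoid_Q5 :
    {v : ℤ × ℤ × ℤ | 2 * v.1 ^ 2 + 2 * v.2.1 ^ 2 + 2 * v.2.2 ^ 2 + v.1 * v.2.1 + 2 * v.1 * v.2.2 + 2 * v.2.1 * v.2.2 - 4 * v.1 - 4 * v.2.1 - 5 * v.2.2 + 3 ≤ 0} =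
      ({(1,1,0), (1,0,1), (0,1,1), (0,0,1)} : Set (ℤ × ℤ × ℤ)) ∧
    ∀ v ∈ ({(1,1,0), (1,0,1), (0,1,1), (0,0,1)} : Set (ℤ × ℤ × ℤ)),
      2 * v.1 ^ 2 + 2 * v.2.1 ^ 2 + 2 * v.2.2 ^ 2 + v.1 * v.2.1 + 2 * v.1 * v.2.2 + 2 * v.2.1 * v.2.2 - 4 * v.1 - 4 * v.2.1 - 5 * v.2.2 + 3 = 0 := by
  change {v | q v ≤ 0} = vertices ∧ ∀ v ∈ vertices, q v = 0
  exact ⟨Set.ext q_nonpos_iff, fun v hv => ((q_nonpos_iff v).mpr hv).antisymm (q_nonneg v)⟩
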